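/- A reduced symmetric set X is isomorphic to the nerve of a group if and only if the Segal map 𝓔ₙ : Xₙ → X₁ⁿ is a bijection for every n ≥ 1. -/

import Mathlib

open CategoryTheory Opposite

/-- The skeleton of the category of finite nonempty sets: objects are natural
numbers `n`, standing for `[n] = {0, …, n}`, morphisms are all functions. -/
def Ups : Type := ℕ

/-- The natural number underlying an object of `Ups`. -/
def Ups.toNat : Ups → ℕ := fun n => n

/-- The object `[n]` of `Ups`. -/
def Ups.of : ℕ → Ups := fun n => n

instance : Category Ups where
  Hom n m := Fin (n.toNat + 1) → Fin (m.toNat + 1)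
  id _ := _root_.id
  comp f g := g ∘ f

/-- A symmetric set is a presheaf on `Ups`. -/
abbrev SymmSet := Upsᵒᵖ ⥤ Type

/-- The map `ε_{ij} : [1] → [n]` sending `0, 1` to `i, j`. -/
def eps (n : ℕ) (i j : Fin (n + 1)) : Ups.of 1 ⟶ Ups.of n :=
  fun k => if k = 0 then i else j

/-- The set of `n`-simplices of a symmetric set. -/
abbrev simp (X : SymmSet) (n : ℕ) : Type := X.obj (op (Ups.of n))

/-- The Bousfield–Segal map `𝓑ₙ : Xₙ → X₁ⁿ`, `x ↦ (ε₀₁*x, …, ε₀ₙ*x)`. -/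
def BS (X : SymmSet) (n : ℕ) (x : simp X n) : Fin n → simp X 1 :=
  fun k => X.map (eps n 0 k.succ).op x

/-- The Segal map `𝓔ₙ : Xₙ → X₁ⁿ`, `x ↦ (ε₀₁*x, ε₁₂*x, …, ε₍ₙ₋₁₎ₙ*x)`. -/
def ES (X : SymmSet) (n : ℕ) (x : simp X n) : Fin n → simp X 1 :=
  fun k => X.map (eps n k.castSucc k.succ).op x

/-- The canonical map `μ_X` to matrices, `x ↦ (ε_{ij}* x)_{ij}`. -/
def muMat (X : SymmSet) (n : ℕ) (x : simp X n) :
    Fin (n + 1) → Fin (n + 1) → simp X 1 :=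
  fun i j => X.map (eps n i j).op x

/-- A symmetric set is spiny if all Bousfield–Segal maps are injective. -/
def Spiny (X : SymmSet) : Prop := ∀ n, Function.Injective (BS X n)
/-- The matrix symmetric set `Mat(S)`: `n`-simplices are functions `[n]×[n] → S`. -/
def MatS (S : Type) : SymmSet where
  obj k := Fin (k.unop.toNat + 1) → Fin (k.unop.toNat + 1) → S
  map f := TypeCat.ofHom fun M => fun a b => M (f.unop a) (f.unop b)
  map_id := by intros; rfl
  map_comp := by intros; rfl

/-- An `n`-simplex is degenerate if it is `ρ* y` for a noninvertible surjection
`ρ : [n] ↠ [m]` and an `m`-simplex `y`. -/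
def Degen (X : SymmSet) (n : ℕ) (x : simp X n) : Prop :=
  ∃ (m : ℕ) (ρ : Ups.of n ⟶ Ups.of m), Function.Surjective ρ ∧
    ¬ Function.Bijective ρ ∧ ∃ y : simp X m, x = X.map ρ.op y

/-- The `d`-skeleton of a symmetric set, as a symmetric subset. -/
def skel (X : SymmSet) (d : ℕ) : SymmSet where
  obj k := {x : X.obj k // ∃ (i : ℕ) (_ : i ≤ d) (α : k.unop ⟶ Ups.of i)
      (y : simp X i), x = X.map α.op y}
  map f := TypeCat.ofHom fun x => ⟨X.map f x.1, by
    obtain ⟨i, hi, α, y, hy⟩ := x.2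
    refine ⟨i, hi, f.unop ≫ α, y, ?_⟩
    rw [hy, ← Functor.map_comp_apply]
    rfl⟩
  map_id := by
    intro k; ext x
    simp
  map_comp := by
    intro k k' k'' f g; ext x
    simp

/-- A symmetric set is `d`-skeletal when all simplices above dimension `d`
are degenerate. -/
def SkeletalLE (X : SymmSet) (d : ℕ) : Prop :=
  ∀ n, d < n → ∀ x : simp X n, Degen X n x

/-- `X` has dimension `d` when `d` is the least integer such that `X` is
`d`-skeletal. -/
def HasDim (X : SymmSet) (d : ℕ) : Prop :=
  IsLeast {m | SkeletalLE X m} d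

/-- A symmetric set is reduced when it has exactly one `0`-simplex. -/
def Reduced (X : SymmSet) : Prop :=
  Nonempty (simp X 0) ∧ Subsingleton (simp X 0)

/-- A partial group is a reduced spiny symmetric set. -/
def IsPartialGroup (X : SymmSet) : Prop := Reduced X ∧ Spiny X

/-- A partial group is trivial when it has no nonidentity elements. -/
def TrivialPG (X : SymmSet) : Prop := Subsingleton (simp X 1)

/-- The order of a partial group: the number of its elements (edges). -/
noncomputable def orderPG (X : SymmSet) : ℕ := Nat.card (simp X 1)

/-- An edge is an identity if it is in the image of the degeneracy `X₀ → X₁`. -/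
def isIdent (X : SymmSet) (e : simp X 1) : Prop :=
  ∃ v : simp X 0, e = X.map (Quiver.Hom.op
    ((fun _ => 0 : Fin 2 → Fin 1) : Ups.of 1 ⟶ Ups.of 0)) v

/-- The source vertex of an edge. -/
def srcE (X : SymmSet) (e : simp X 1) : simp X 0 :=
  X.map (Quiver.Hom.op ((fun _ => 0 : Fin 1 → Fin 2) : Ups.of 0 ⟶ Ups.of 1)) e

/-- `X` has (higher Segal) degree at most `k`: for each starry word `w` of
length `n+1 ≥ k+1`, if the last `k+1` faces `d_{n+1-k} w, …, d_{n+1} w` of `w`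
are Bousfield–Segal images of simplices, then so is `w`. -/
def HasDegLE (X : SymmSet) (k : ℕ) : Prop :=
  ∀ n, k ≤ n → ∀ w : Fin (n + 1) → simp X 1,
    (∀ a b, srcE X (w a) = srcE X (w b)) →
    (∀ i : Fin (n + 1), n ≤ (i : ℕ) + k →
      (fun j : Fin n => w (i.succAbove j)) ∈ Set.range (BS X n)) →
    w ∈ Set.range (BS X (n + 1))

/-- `X` has degree `d`: `d` is the least `k ≥ 1` with `HasDegLE X k`. -/
def DegreeIs (X : SymmSet) (d : ℕ) : Prop :=
  IsLeast {k | 1 ≤ k ∧ HasDegLE X k} d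

/-- `W`, with structure maps `i, j`, is a coproduct of `Y` and `Z` in the
category of partial groups. -/
def IsPGCoproduct (W Y Z : SymmSet) (i : Y ⟶ W) (j : Z ⟶ W) : Prop :=
  ∀ V : SymmSet, IsPartialGroup V → ∀ (f : Y ⟶ V) (g : Z ⟶ V),
    ∃! h : W ⟶ V, i ≫ h = f ∧ j ≫ h = g

/-- The nerve of a group `G`, as a symmetric set: an `n`-simplex is a matrix
`(g_{ij})` of elements of `G` satisfying the cocycle condition. -/
def grpNerve (G : Type) [Group G] : SymmSet where
  obj k := {M : Fin (k.unop.toNat + 1) → Fin (k.unop.toNat + 1) → G //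
      ∀ i j l, M i j * M j l = M i l}
  map f := TypeCat.ofHom fun M => ⟨fun a b => M.1 (f.unop a) (f.unop b),
    fun i j l => M.2 (f.unop i) (f.unop j) (f.unop l)⟩
  map_id := by intro k; ext M; rfl
  map_comp := by intros; ext M; rfl

/-! A simplex of a group nerve is a cocycle matrix `gᵢⱼ = qᵢ⁻¹ qⱼ`, so it is determined by its
superdiagonal, and any superdiagonal is realised by partial products `qᵢ`: the Segal maps of a
nerve are bijective, and this transports along isomorphisms. Conversely, Segal bijectivity
defines a product on `X₁`: `g h` is the edge `ε₀₂*` of the 2-simplex with spine `(g, h)`; the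
3-simplex with spine `(a, b, c)` gives associativity, and the degenerate edge is the unit. Then
`x ↦ (ε_{ij}* x)_{ij}` is a map from `X` to the nerve of `X₁` which is bijective on edges, hence,
comparing Segal maps, in every degree. -/

section Cocycle

variable {G : Type*} [Group G] {n : ℕ} {M N : Fin (n + 1) → Fin (n + 1) → G}

lemma cocycle_diag (hM : ∀ i j l, M i j * M j l = M i l) (i : Fin (n + 1)) : M i i = 1 :=
  mul_eq_left.mp (hM i i i)

lemma cocycle_eq_inv_mul (hM : ∀ i j l, M i j * M j l = M i l) (i j : Fin (n + 1)) :
    M i j = (M 0 i)⁻¹ * M 0 j :=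
  eq_inv_mul_of_mul_eq (hM 0 i j)

lemma cocycle_ext (hM : ∀ i j l, M i j * M j l = M i l) (hN : ∀ i j l, N i j * N j l = N i l)
    (h : ∀ k : Fin n, M k.castSucc k.succ = N k.castSucc k.succ) : M = N := by
  have row : ∀ j, M 0 j = N 0 j := by
    refine Fin.induction (by rw [cocycle_diag hM, cocycle_diag hN]) fun k ih => ?_
    rw [← hM 0 k.castSucc k.succ, ← hN 0 k.castSucc k.succ, ih, h k]
  funext i j
  rw [cocycle_eq_inv_mul hM, cocycle_eq_inv_mul hN, row, row]

end Cocycle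

lemma eps_comp {m n : ℕ} (f : Ups.of m ⟶ Ups.of n) (i j : Fin (m + 1)) :
    eps m i j ≫ f = eps n (f i) (f j) := by
  funext k
  show f (eps m i j k) = eps n (f i) (f j) k
  by_cases hk : k = 0 <;> simp [eps, hk]

lemma eps_zero_one : eps 1 0 1 = 𝟙 (Ups.of 1) := by
  funext k
  fin_cases k <;> rfl

lemma muMat_map (X : SymmSet) {m n : ℕ} (f : Ups.of m ⟶ Ups.of n) (x : simp X n)
    (i j : Fin (m + 1)) :
    muMat X m (X.map f.op x) i j = muMat X n x (f i) (f j) := by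
  show X.map (eps m i j).op (X.map f.op x) = X.map (eps n (f i) (f j)).op x
  rw [← eps_comp f i j, op_comp, Functor.map_comp_apply]

lemma muMat_one_zero_one (X : SymmSet) (g : simp X 1) : muMat X 1 g 0 1 = g := by
  show X.map (eps 1 0 1).op g = g
  rw [eps_zero_one, op_id, Functor.map_id_apply]

lemma muMat_diag {X : SymmSet} (hX : Reduced X) {n : ℕ} (x : simp X n) (i : Fin (n + 1)) :
    muMat X n x i i = muMat X 0 hX.1.some 0 0 := by
  have hv : X.map (Quiver.Hom.op (fun _ => i : Ups.of 0 ⟶ Ups.of n)) x = hX.1.some :=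
    @Subsingleton.elim _ hX.2 _ _
  rw [← hv]
  exact (muMat_map X (m := 0) (fun _ => i) x 0 0).symm

lemma Reduced.ES_zero_bijective {X : SymmSet} (hX : Reduced X) : Function.Bijective (ES X 0) :=
  ⟨fun x y _ => @Subsingleton.elim _ hX.2 x y,
    fun _ => ⟨hX.1.some, funext fun k => k.elim0⟩⟩

section Naturality

variable {X Y : SymmSet}

lemma ES_comp_app (f : X ⟶ Y) (n : ℕ) :
    ES Y n ∘ f.app (op (Ups.of n)) = (f.app (op (Ups.of 1)) ∘ ·) ∘ ES X n :=
  funext fun x => funext fun k => (NatTrans.naturality_apply f (eps n k.castSucc k.succ).op x).symm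

lemma ES_bijective_iff_of_iso (e : X ≅ Y) (n : ℕ) :
    Function.Bijective (ES X n) ↔ Function.Bijective (ES Y n) := by
  have he : ∀ m, Function.Bijective (e.hom.app (op (Ups.of m))) :=
    fun m => (e.app (op (Ups.of m))).toEquiv.bijective
  rw [← Function.Bijective.of_comp_iff (ES Y n) (he n), ES_comp_app,
    Function.Bijective.of_comp_iff' (he 1).comp_left]

lemma app_bijective_of_ES_bijective (f : X ⟶ Y) {n : ℕ}
    (h1 : Function.Bijective (f.app (op (Ups.of 1))))
    (hX : Function.Bijective (ES X n)) (hY : Function.Bijective (ES Y n)) :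
    Function.Bijective (f.app (op (Ups.of n))) := by
  rw [← Function.Bijective.of_comp_iff' hY, ES_comp_app]
  exact h1.comp_left.comp hX

end Naturality

lemma grpNerve_ES_bijective (G : Type) [Group G] (n : ℕ) :
    Function.Bijective (ES (grpNerve G) n) := by
  refine ⟨fun M N h => Subtype.ext (cocycle_ext M.2 N.2 fun k => ?_), fun w => ?_⟩
  · exact congrFun (congrFun (congrArg Subtype.val (congrFun h k)) 0) 1
  · let q := Fin.partialProd fun k => (w k).1 0 1
    refine ⟨⟨fun i j => (q i)⁻¹ * q j, fun i j l => by group⟩, funext fun k => ?_⟩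
    refine Subtype.ext (cocycle_ext (ES (grpNerve G) n _ k).2 (w k).2 fun k' => ?_)
    fin_cases k'
    exact Fin.partialProd_right_inv _ k

section SegalGroup

variable (X : SymmSet) (h2 : Function.Bijective (ES X 2))

noncomputable def segalMul (g h : simp X 1) : simp X 1 :=
  muMat X 2 ((Equiv.ofBijective _ h2).symm ![g, h]) 0 2

lemma segalMul_muMat {n : ℕ} (x : simp X n) (i j l : Fin (n + 1)) :
    segalMul X h2 (muMat X n x i j) (muMat X n x j l) = muMat X n x i l := by
  let z := X.map (Quiver.Hom.op (![i, j, l] : Ups.of 2 ⟶ Ups.of n)) x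
  have hz : ES X 2 z = ![muMat X n x i j, muMat X n x j l] := by
    funext k
    fin_cases k
    exacts [muMat_map X _ x 0 1, muMat_map X _ x 1 2]
  rw [segalMul, ← hz, Equiv.ofBijective_symm_apply_apply]
  exact muMat_map X _ x 0 2

lemma segalMul_assoc (h3 : Function.Bijective (ES X 3)) (a b c : simp X 1) :
    segalMul X h2 (segalMul X h2 a b) c = segalMul X h2 a (segalMul X h2 b c) := by
  obtain ⟨x, hx⟩ := h3.2 ![a, b, c]
  have h01 : muMat X 3 x 0 1 = a := congrFun hx 0
  have h12 : muMat X 3 x 1 2 = b := congrFun hx 1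
  have h23 : muMat X 3 x 2 3 = c := congrFun hx 2
  rw [← h01, ← h12, ← h23, segalMul_muMat, segalMul_muMat, segalMul_muMat, segalMul_muMat]

noncomputable abbrev segalGroup (hX : Reduced X) (h3 : Function.Bijective (ES X 3)) :
    Group (simp X 1) where
  mul := segalMul X h2
  one := muMat X 0 hX.1.some 0 0
  inv g := muMat X 1 g 1 0
  mul_assoc := segalMul_assoc X h2 h3
  one_mul g := by
    have h := segalMul_muMat X h2 g 0 0 1
    rw [muMat_diag hX, muMat_one_zero_one] at h
    exact h
  mul_one g := by
    have h := segalMul_muMat X h2 g 0 1 1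
    rw [muMat_diag hX, muMat_one_zero_one] at h
    exact h
  inv_mul_cancel g := by
    have h := segalMul_muMat X h2 g 1 0 1
    rw [muMat_one_zero_one, muMat_diag hX] at h
    exact h

end SegalGroup

section ToGrpNerve

variable (X : SymmSet) [Group (simp X 1)]
  (hmul : ∀ n (x : simp X n) i j l, muMat X n x i j * muMat X n x j l = muMat X n x i l)

def toGrpNerve : X ⟶ grpNerve (simp X 1) where
  app k := TypeCat.ofHom fun x => ⟨muMat X (unop k).toNat x, hmul _ x⟩
  naturality _ _ f := by
    ext x
    exact Subtype.ext (funext₂ (muMat_map X f.unop x))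

lemma toGrpNerve_app_one_bijective :
    Function.Bijective ((toGrpNerve X hmul).app (op (Ups.of 1))) := by
  refine ⟨fun g h hgh => ?_, fun M => ⟨M.1 0 1, ?_⟩⟩
  · rw [← muMat_one_zero_one X g, ← muMat_one_zero_one X h]
    exact congrFun (congrFun (congrArg Subtype.val hgh) 0) 1
  · refine Subtype.ext (cocycle_ext (hmul 1 _) M.2 fun k => ?_)
    fin_cases k
    exact muMat_one_zero_one X _

end ToGrpNerve

/-- A reduced symmetric set is isomorphic to the nerve of a group if and only
if all of its Segal maps `𝓔ₙ : Xₙ → X₁ⁿ` (`n ≥ 1`) are bijections. -/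
theorem reduced_iso_group_nerve_iff_segal_bijective (X : SymmSet)
    (hX : Reduced X) :
    (∃ (G : Type) (hG : Group G), Nonempty (X ≅ @grpNerve G hG)) ↔
      ∀ n, 1 ≤ n → Function.Bijective (ES X n) := by
  constructor
  · rintro ⟨G, hG, ⟨e⟩⟩ n -
    exact (ES_bijective_iff_of_iso e n).2 (grpNerve_ES_bijective G n)
  · intro hSeg
    have hES : ∀ n, Function.Bijective (ES X n)
      | 0 => hX.ES_zero_bijective
      | n + 1 => hSeg (n + 1) n.succ_pos
    let := segalGroup X (hES 2) hX (hES 3)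
    let φ := toGrpNerve X fun _ => segalMul_muMat X (hES 2)
    have : ∀ k, IsIso (φ.app k) := fun k => (isIso_iff_bijective _).2 <|
      app_bijective_of_ES_bijective φ (toGrpNerve_app_one_bijective X _) (hES (unop k).toNat)
        (grpNerve_ES_bijective _ _)
    have : IsIso φ := NatIso.isIso_of_isIso_app φ
    exact ⟨simp X 1, inferInstance, ⟨asIso φ⟩⟩
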